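/- arXiv:2004.11811 — 2 statements merged into one kernel-verified Lean document; each statement's English description precedes it below -/
import Mathlib

section
/- For every integer n ≥ 1 and every λ ∈ k with λ ≠ 0, the k-vector space of Λ_e-module endomorphisms of the band module B(n,λ) — i.e. tuples (f_1,…,f_e) of k-linear maps f_i : B(n,λ)_i → B(n,λ)_i commuting with all structure maps — has dimension n² + n. -/
/-! Common framework: representations of the quiver Q_e / modules over the
generalized Brauer star algebra Λ_e, encoded as a module `V` together with
endomorphisms `v i` (images of the vertex idempotents), `a i` (images of the
arrows; `a i` is the arrow leaving vertex `i`, with `a ⟨e-1⟩` the arrow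
`α_e : e → 1`) and `d` (image of the loop `δ`). -/

namespace GBTA

structure PreRep (R : Type) [CommRing R] (e : ℕ) : Type 1 where
  V : Type
  [instAdd : AddCommGroup V]
  [instMod : Module R V]
  v : Fin e → Module.End R V
  a : Fin e → Module.End R V
  d : Module.End R V

attribute [instance] PreRep.instAdd PreRep.instMod

variable {R : Type} [CommRing R] {e : ℕ}

/-- The (0-based) index of the vertex `e`. -/
def ve (e : ℕ) [NeZero e] : Fin e :=
  ⟨e - 1, by have := Nat.pos_of_ne_zero (NeZero.ne e); omega⟩

/-- The (0-based) index of the vertex `e - 1`. -/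
def vem (e : ℕ) [NeZero e] : Fin e :=
  ⟨e - 2, by have := Nat.pos_of_ne_zero (NeZero.ne e); omega⟩

/-- The cycle `C_i`: the composite of the `e` cyclically consecutive arrows
starting with the arrow leaving vertex `i` (composites written right to left). -/
def cyc [NeZero e] (ρ : PreRep R e) (i : Fin e) : Module.End R ρ.V :=
  (((List.range e).reverse).map fun l => ρ.a (i + Fin.ofNat e l)).prod

/-- The defining relations of the generalized Brauer star algebra `Λ_e`. -/
def Satisfies [NeZero e] (ρ : PreRep R e) : Prop :=
  (∀ i j : Fin e, i ≠ j → ρ.v i * ρ.v j = 0) ∧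
  (∀ i : Fin e, ρ.v i * ρ.v i = ρ.v i) ∧
  ((∑ i : Fin e, ρ.v i) = 1) ∧
  (∀ i : Fin e, ρ.a i = ρ.v (i + 1) * ρ.a i * ρ.v i) ∧
  (ρ.d = ρ.v (ve e) * ρ.d * ρ.v (ve e)) ∧
  (ρ.d * ρ.a (vem e) = 0) ∧
  (ρ.a (ve e) * ρ.d = 0) ∧
  (ρ.d * ρ.d = cyc ρ (ve e) * cyc ρ (ve e)) ∧
  (∀ i : Fin e, i ≠ ve e → ρ.a i * (cyc ρ i * cyc ρ i) = 0)

/-- The space of `Λ_e`-module homomorphisms `ρ → σ`: linear maps commuting with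
all the structure maps. -/
def homSet (ρ σ : PreRep R e) : Submodule R (ρ.V →ₗ[R] σ.V) where
  carrier := {f | (∀ i, f ∘ₗ ρ.v i = σ.v i ∘ₗ f) ∧ (∀ i, f ∘ₗ ρ.a i = σ.a i ∘ₗ f) ∧
    f ∘ₗ ρ.d = σ.d ∘ₗ f}
  add_mem' := by
    rintro f g ⟨hfv, hfa, hfd⟩ ⟨hgv, hga, hgd⟩
    exact ⟨fun i => by simp only [LinearMap.add_comp, LinearMap.comp_add, hfv i, hgv i],
      fun i => by simp only [LinearMap.add_comp, LinearMap.comp_add, hfa i, hga i],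
      by simp only [LinearMap.add_comp, LinearMap.comp_add, hfd, hgd]⟩
  zero_mem' := ⟨fun i => by simp, fun i => by simp, by simp⟩
  smul_mem' := by
    rintro c f ⟨hfv, hfa, hfd⟩
    exact ⟨fun i => by simp only [LinearMap.smul_comp, LinearMap.comp_smul, hfv i],
      fun i => by simp only [LinearMap.smul_comp, LinearMap.comp_smul, hfa i],
      by simp only [LinearMap.smul_comp, LinearMap.comp_smul, hfd]⟩

/-- Projectivity of a `Λ_e`-module, via the lifting property in the category of
`Λ_e`-modules. -/
def IsProjective [NeZero e] (P : PreRep R e) : Prop :=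
  Satisfies P ∧
  ∀ (A B : PreRep R e), Satisfies A → Satisfies B →
    ∀ p ∈ homSet A B, Function.Surjective p →
      ∀ g ∈ homSet P B, ∃ h ∈ homSet P A, p ∘ₗ h = g

/-- An endomorphism `f` of `ρ` factors through a projective `Λ_e`-module. -/
def FactorsThroughProjective [NeZero e] (ρ : PreRep R e) (f : ρ.V →ₗ[R] ρ.V) : Prop :=
  ∃ P : PreRep R e, IsProjective P ∧ ∃ g ∈ homSet ρ P, ∃ h ∈ homSet P ρ, f = h ∘ₗ g

/-- "The stable endomorphism ring of `ρ` is isomorphic to the scalars": the identity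
does not factor through a projective, and modulo endomorphisms factoring through
projectives every endomorphism is a scalar multiple of the identity. -/
def StableEndIsoScalars [NeZero e] (ρ : PreRep R e) : Prop :=
  (¬ FactorsThroughProjective ρ LinearMap.id) ∧
  ∀ f ∈ homSet ρ ρ, ∃ c : R, FactorsThroughProjective ρ (f - c • LinearMap.id)

/-- The linear map on `Fin m → W` sending the `src` coordinate to the `dst`
coordinate through `g`, and killing all other coordinates. -/
def mk1 {m : ℕ} {W : Type} [AddCommGroup W] [Module R W] (src dst : Fin m)
    (g : W →ₗ[R] W) : (Fin m → W) →ₗ[R] (Fin m → W) where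
  toFun x := fun r => if r = dst then g (x src) else 0
  map_add' x y := by funext r; by_cases h : r = dst <;> simp [h]
  map_smul' c x := by funext r; by_cases h : r = dst <;> simp [h]

/-- Projection onto the coordinates satisfying `S`. -/
def prj {m : ℕ} {W : Type} [AddCommGroup W] [Module R W] (S : Fin m → Prop)
    [DecidablePred S] : (Fin m → W) →ₗ[R] (Fin m → W) where
  toFun x := fun r => if S r then x r else 0
  map_add' x y := by funext r; by_cases h : S r <;> simp [h]
  map_smul' c x := by funext r; by_cases h : S r <;> simp [h]

/-- Last row index (`e`, 0-based) among `e+1` rows. -/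
def lastRow (e : ℕ) : Fin (e + 1) := ⟨e, Nat.lt_succ_self e⟩

/-- Second-to-last row index (`e-1`, 0-based) among `e+1` rows. -/
def sndRow (e : ℕ) : Fin (e + 1) := ⟨e - 1, by omega⟩

/-- The vertex carrying each of the `e+1` rows: row `r < e-1` sits at vertex `r`,
rows `e-1` and `e` sit at the vertex `e` (0-based index `e-1`). -/
def vrt (e : ℕ) [NeZero e] : Fin (e + 1) → Fin e := fun r =>
  if h : r.val < e - 1 then ⟨r.val, by omega⟩ else ve e


/-- The `n × n` Jordan block with eigenvalue `lam`. -/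
def jordan (R : Type) [CommRing R] (n : ℕ) (lam : R) : Matrix (Fin n) (Fin n) R :=
  Matrix.of fun i j => if i = j then lam else if (j : ℕ) = (i : ℕ) + 1 then 1 else 0

/-- The band module `B(n, lam)`. Rows `0, …, e-2` are the components `k^n` at the
vertices `1, …, e-1`; rows `e-1` and `e` are the two copies of `k^n` at vertex `e`. -/
@[reducible] def band (R : Type) [CommRing R] (e : ℕ) [NeZero e] (n : ℕ) (lam : R) : PreRep R e where
  V := Fin (e + 1) → Fin n → R
  v i := prj fun r => vrt e r = i
  a j :=
    if j.val = e - 1 then mk1 (sndRow e) ⟨0, by omega⟩ LinearMap.id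
    else if j.val = e - 2 then mk1 ⟨e - 2, by omega⟩ (lastRow e) LinearMap.id
    else mk1 ⟨j.val, Nat.lt_succ_of_lt j.isLt⟩ ⟨j.val + 1, Nat.succ_lt_succ j.isLt⟩ LinearMap.id
  d := mk1 (sndRow e) (lastRow e) (Matrix.mulVecLin (jordan R n lam))

/-- The band module `B(1, s)` (with `δ` acting through the scalar `s`); the standard
basis vector `c_i` (`1 ≤ i ≤ e-1`) is the `i-1`-st coordinate, `c_e` the `e-1`-st and
`c_{e+1}` the `e`-th. -/
@[reducible] def band1 (R : Type) [CommRing R] (e : ℕ) [NeZero e] (s : R) : PreRep R e where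
  V := Fin (e + 1) → R
  v i := prj fun r => vrt e r = i
  a j :=
    if j.val = e - 1 then mk1 (sndRow e) ⟨0, by omega⟩ LinearMap.id
    else if j.val = e - 2 then mk1 ⟨e - 2, by omega⟩ (lastRow e) LinearMap.id
    else mk1 ⟨j.val, Nat.lt_succ_of_lt j.isLt⟩ ⟨j.val + 1, Nat.succ_lt_succ j.isLt⟩ LinearMap.id
  d := mk1 (sndRow e) (lastRow e) (s • LinearMap.id)

/-- The projective module `P_e`, with basis `b_{i,1}, b_{i,2}` (row `i-1`) for
`1 ≤ i ≤ e-1` and `b_{e,1}, b_{e,2}` (row `e-1`), `b_{e,3}, b_{e,4}` (row `e`). -/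
@[reducible] def Pe (R : Type) [CommRing R] (e : ℕ) [NeZero e] : PreRep R e where
  V := Fin (e + 1) → Fin 2 → R
  v i := prj fun r => vrt e r = i
  a j :=
    if j.val = e - 1 then mk1 (sndRow e) ⟨0, by omega⟩ LinearMap.id
    else if j.val = e - 2 then
      mk1 ⟨e - 2, by omega⟩ (sndRow e) (Matrix.mulVecLin !![0, 0; 1, 0])
        + mk1 ⟨e - 2, by omega⟩ (lastRow e) (Matrix.mulVecLin !![0, 0; 0, 1])
    else mk1 ⟨j.val, Nat.lt_succ_of_lt j.isLt⟩ ⟨j.val + 1, Nat.succ_lt_succ j.isLt⟩ LinearMap.id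
  d := mk1 (sndRow e) (lastRow e) (Matrix.mulVecLin !![1, 0; 0, 0])
    + mk1 (lastRow e) (lastRow e) (Matrix.mulVecLin !![0, 0; 1, 0])

/-- `Mdef R e τ`: the representation with basis `m_1, …, m_{e+1}` (rows `0, …, e`),
`α_j(m_j) = m_{j+1}` for `j ≤ e-2`, `α_{e-1}(m_{e-1}) = τ · m_{e+1}`,
`α_e(m_e) = m_1`, `δ(m_e) = m_{e+1}`.  For `τ = 0` this is the string module `W`. -/
@[reducible] def Mdef (R : Type) [CommRing R] (e : ℕ) [NeZero e] (t : R) : PreRep R e where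
  V := Fin (e + 1) → R
  v i := prj fun r => vrt e r = i
  a j :=
    if j.val = e - 1 then mk1 (sndRow e) ⟨0, by omega⟩ LinearMap.id
    else if j.val = e - 2 then mk1 ⟨e - 2, by omega⟩ (lastRow e) (t • LinearMap.id)
    else mk1 ⟨j.val, Nat.lt_succ_of_lt j.isLt⟩ ⟨j.val + 1, Nat.succ_lt_succ j.isLt⟩ LinearMap.id
  d := mk1 (sndRow e) (lastRow e) LinearMap.id

/-- The uniserial module `U_{[i,j]}` (with `1 ≤ i ≤ j ≤ e`, 1-based). -/
@[reducible] def U (R : Type) [CommRing R] (e i j : ℕ) : PreRep R e where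
  V := Fin (j + 1 - i) → R
  v t := prj fun r => i - 1 + r.val = t.val
  a t :=
    if h : i ≤ t.val + 1 ∧ t.val + 1 ≤ j - 1 then
      mk1 ⟨t.val + 1 - i, by omega⟩ ⟨t.val + 2 - i, by omega⟩ LinearMap.id
    else 0
  d := 0

/-- The uniserial projective module `P_i` (`i0` is the 0-based index of the vertex),
with basis `p_0, …, p_{2e}` following the cycle of arrows twice around. -/
@[reducible] def Puni (R : Type) [CommRing R] (e : ℕ) [NeZero e] (i0 : ℕ) : PreRep R e where
  V := Fin (2 * e + 1) → R
  v t := prj fun r => (i0 + r.val) % e = t.val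
  a t := ∑ l : Fin (2 * e),
    if (i0 + l.val) % e = t.val then mk1 l.castSucc l.succ LinearMap.id else 0
  d := 0

/-- The simple module `S_e` at the vertex `e`. -/
@[reducible] def Se (R : Type) [CommRing R] (e : ℕ) [NeZero e] : PreRep R e where
  V := R
  v i := if i = ve e then 1 else 0
  a _ := 0
  d := 0

/-- Block upper triangular endomorphism `(x, y) ↦ (f x + θ y, f y)` of `V × V`. -/
def blk {V : Type} [AddCommGroup V] [Module R V] (f th : Module.End R V) :
    Module.End R (V × V) where
  toFun p := (f p.1 + th p.2, f p.2)
  map_add' p q := by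
    simp only [Prod.fst_add, Prod.snd_add, map_add, Prod.mk_add_mk, Prod.mk.injEq, and_true]
    abel
  map_smul' c p := by
    simp only [Prod.smul_fst, Prod.smul_snd, map_smul, Prod.smul_mk, Prod.mk.injEq,
      smul_add, RingHom.id_apply, and_self]

section Ext
variable [NeZero e]

/-- The data of a self-extension of `ρ`: for each generator of `Λ_e`, the
off-diagonal block of its action on `ρ.V × ρ.V`. -/
abbrev Cochain (ρ : PreRep R e) : Type :=
  (Fin e → Module.End R ρ.V) × (Fin e → Module.End R ρ.V) × Module.End R ρ.V

/-- The self-extension of `ρ` determined by the cochain `θ`. -/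
@[reducible] def extRep (ρ : PreRep R e) (th : Cochain ρ) : PreRep R e where
  V := ρ.V × ρ.V
  v i := blk (ρ.v i) (th.1 i)
  a i := blk (ρ.a i) (th.2.1 i)
  d := blk ρ.d th.2.2

/-- `θ` is a cocycle precisely when the corresponding extension is a `Λ_e`-module. -/
def IsCocycle (ρ : PreRep R e) (th : Cochain ρ) : Prop := Satisfies (extRep ρ th)

/-- The coboundary of `φ`; extensions differing by a coboundary are equivalent. -/
def bnd (ρ : PreRep R e) (phi : Module.End R ρ.V) : Cochain ρ :=
  (fun i => ρ.v i * phi - phi * ρ.v i, fun i => ρ.a i * phi - phi * ρ.a i,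
    ρ.d * phi - phi * ρ.d)

/-- `Ext¹_{Λ_e}(ρ, ρ)`, i.e. the space of self-extensions of `ρ` modulo equivalence
(equivalently cocycles modulo coboundaries), is one-dimensional. -/
def ExtSelfOneDimensional (ρ : PreRep R e) : Prop :=
  ∃ th0 : Cochain ρ, IsCocycle ρ th0 ∧ (∀ phi, th0 ≠ bnd ρ phi) ∧
    ∀ th : Cochain ρ, IsCocycle ρ th → ∃ (c : R) (phi : Module.End R ρ.V),
      th = c • th0 + bnd ρ phi

end Ext


/-- The endomorphism algebra of a representation. -/
def endAlg (ρ : PreRep R e) : Subalgebra R (Module.End R ρ.V) where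
  carrier := {f | (∀ i, f * ρ.v i = ρ.v i * f) ∧ (∀ i, f * ρ.a i = ρ.a i * f) ∧
    f * ρ.d = ρ.d * f}
  mul_mem' := by
    rintro f g ⟨hfv, hfa, hfd⟩ ⟨hgv, hga, hgd⟩
    refine ⟨fun i => ?_, fun i => ?_, ?_⟩
    · rw [mul_assoc, hgv i, ← mul_assoc, hfv i, mul_assoc]
    · rw [mul_assoc, hga i, ← mul_assoc, hfa i, mul_assoc]
    · rw [mul_assoc, hgd, ← mul_assoc, hfd, mul_assoc]
  one_mem' := ⟨fun i => by rw [one_mul, mul_one], fun i => by rw [one_mul, mul_one],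
    by rw [one_mul, mul_one]⟩
  add_mem' := by
    rintro f g ⟨hfv, hfa, hfd⟩ ⟨hgv, hga, hgd⟩
    exact ⟨fun i => by rw [add_mul, mul_add, hfv i, hgv i],
      fun i => by rw [add_mul, mul_add, hfa i, hga i],
      by rw [add_mul, mul_add, hfd, hgd]⟩
  zero_mem' := ⟨fun i => by rw [zero_mul, mul_zero], fun i => by rw [zero_mul, mul_zero],
    by rw [zero_mul, mul_zero]⟩
  algebraMap_mem' c :=
    ⟨fun i => Algebra.commutes c (ρ.v i), fun i => Algebra.commutes c (ρ.a i),
      Algebra.commutes c ρ.d⟩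

/-- The endomorphism `τ` of `B(1,λ)` (and of `W`): `c_e ↦ c_{e+1}`, all other
standard basis vectors to `0`. -/
def tau (R : Type) [CommRing R] (e : ℕ) : (Fin (e + 1) → R) →ₗ[R] (Fin (e + 1) → R) :=
  mk1 (sndRow e) (lastRow e) LinearMap.id

/-- The map `r₁ : B(1,λ) → P_e` (with parameter `μ` the coefficient on `b_{e,3}`):
`c_i ↦ b_{i,2}` for `1 ≤ i ≤ e-1`, `c_e ↦ b_{e,2} + μ b_{e,3}`, `c_{e+1} ↦ b_{e,4}`. -/
def r1 (R : Type) [CommRing R] (e : ℕ) (mu : R) :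
    (Fin (e + 1) → R) →ₗ[R] (Fin (e + 1) → Fin 2 → R) where
  toFun x := fun r c => if c = 1 then x r else if r = lastRow e then mu * x (sndRow e) else 0
  map_add' x y := by
    funext r c
    by_cases h : c = 1
    · simp [h]
    · by_cases h2 : r = lastRow e <;> simp [h, h2, mul_add]
  map_smul' t x := by
    funext r c
    by_cases h : c = 1
    · simp [h]
    · by_cases h2 : r = lastRow e <;> simp [h, h2] <;> ring

/-- The map `r₂ : B(1,λ) → P_e`: `c_e ↦ b_{e,4}`, all other basis vectors to `0`. -/
def r2 (R : Type) [CommRing R] (e : ℕ) :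
    (Fin (e + 1) → R) →ₗ[R] (Fin (e + 1) → Fin 2 → R) where
  toFun x := fun r c => if r = lastRow e ∧ c = 1 then x (sndRow e) else 0
  map_add' x y := by
    funext r c
    by_cases h : r = lastRow e ∧ c = 1 <;> simp [h]
  map_smul' t x := by
    funext r c
    by_cases h : r = lastRow e ∧ c = 1 <;> simp [h]

/-- The map `s₁ : P_e → B(1,λ)`: `b_{e,1} ↦ c_e`, `b_{e,2} ↦ c_{e+1}`,
`b_{e,3} ↦ λ c_{e+1}`, `b_{i,1} ↦ c_i`; zero on `b_{e,4}` and the `b_{i,2}`. -/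
def s1 (R : Type) [CommRing R] (e : ℕ) (lam : R) :
    (Fin (e + 1) → Fin 2 → R) →ₗ[R] (Fin (e + 1) → R) where
  toFun y := fun r =>
    if r = lastRow e then y (sndRow e) 1 + lam * y (lastRow e) 0 else y r 0
  map_add' x y := by
    funext r
    by_cases h : r = lastRow e <;> simp [h, mul_add] <;> ring
  map_smul' t x := by
    funext r
    by_cases h : r = lastRow e <;> simp [h] <;> ring

/-- The map `s₂ : P_e → B(1,λ)`: `b_{e,1} ↦ c_{e+1}`, all other basis vectors to `0`. -/
def s2 (R : Type) [CommRing R] (e : ℕ) :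
    (Fin (e + 1) → Fin 2 → R) →ₗ[R] (Fin (e + 1) → R) where
  toFun y := fun r => if r = lastRow e then y (sndRow e) 0 else 0
  map_add' x y := by funext r; by_cases h : r = lastRow e <;> simp [h]
  map_smul' t x := by funext r; by_cases h : r = lastRow e <;> simp [h]

/-- The map `g : W → P_e`, `w_e ↦ b_{e,3}`, `w_{e+1} ↦ b_{e,4}`, `w_j ↦ 0`. -/
def gW (R : Type) [CommRing R] (e : ℕ) :
    (Fin (e + 1) → R) →ₗ[R] (Fin (e + 1) → Fin 2 → R) where
  toFun x := fun r c =>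
    if r = lastRow e then (if c = 0 then x (sndRow e) else x (lastRow e)) else 0
  map_add' x y := by
    funext r c
    by_cases h : r = lastRow e <;> by_cases h2 : c = 0 <;> simp [h, h2]
  map_smul' t x := by
    funext r c
    by_cases h : r = lastRow e <;> by_cases h2 : c = 0 <;> simp [h, h2]

/-- The map `h : P_e → W`, `b_{e,1} ↦ w_e`, `b_{j,1} ↦ w_j`, `b_{e,3} ↦ w_{e+1}`,
zero on `b_{e,2}`, `b_{e,4}` and the `b_{j,2}`. -/
def hW (R : Type) [CommRing R] (e : ℕ) :
    (Fin (e + 1) → Fin 2 → R) →ₗ[R] (Fin (e + 1) → R) where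
  toFun y := fun r => y r 0
  map_add' x y := rfl
  map_smul' t x := rfl

/-! An endomorphism `f` of `B(n, λ)` preserves the vertex decomposition. Commuting with the
identity arrows `α_e, α_1, …, α_{e-1}`, which carry the first copy of `k^n` at vertex `e` through
all other vertices to the second copy, forces `f` to act by one and the same `A` on every copy of
`k^n`, up to an arbitrary corner `C` from the first copy at vertex `e` to the second; commuting
with `δ` then says exactly that `A` commutes with `J_n(λ)`. So `End(B(n, λ))` is the product of
the centralizer of `J_n(λ)` and `End(k^n)`. That centralizer is the centralizer of the nilpotent
shift `J_n(0)`, which has a cyclic vector `x`; evaluation at `x` identifies it with `k^n`. -/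

theorem _root_.Module.End.finrank_centralizer_eq_of_span_pow_apply_eq_top {K V : Type*}
    [CommRing K] [AddCommGroup V] [Module K V]
    (T : Module.End K V) (x : V) (hx : Submodule.span K (Set.range fun i : ℕ => (T ^ i) x) = ⊤) :
    Module.finrank K (Subalgebra.centralizer K {T}) = Module.finrank K V := by
  let evalAt : Subalgebra.centralizer K {T} →ₗ[K] V :=
    LinearMap.applyₗ x ∘ₗ (Subalgebra.centralizer K {T}).val.toLinearMap
  have hcomm : ∀ A ∈ Subalgebra.centralizer K {T}, ∀ i : ℕ, A ((T ^ i) x) = (T ^ i) (A x) := by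
    intro A hA i
    have : Commute (T ^ i) A :=
      (show Commute T A from (Subalgebra.mem_centralizer_iff K).1 hA T rfl).pow_left i
    exact (LinearMap.congr_fun this x).symm
  refine (LinearEquiv.ofBijective evalAt ⟨?_, ?_⟩).finrank_eq
  · rw [← LinearMap.ker_eq_bot, Submodule.eq_bot_iff]
    rintro ⟨A, hA⟩ hAx
    have hAx : A x = 0 := hAx
    ext1
    exact LinearMap.ext_on_range hx fun i => by simp [hcomm A hA i, hAx]
  · rw [← LinearMap.range_eq_top, eq_top_iff, ← hx, Submodule.span_le]
    rintro _ ⟨i, rfl⟩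
    have hT : T ∈ Subalgebra.centralizer K {T} := by
      rw [Subalgebra.mem_centralizer_iff]; rintro _ rfl; rfl
    exact ⟨⟨T ^ i, pow_mem hT i⟩, rfl⟩

theorem jordan_eq_smul_one_add (n : ℕ) (lam : R) : jordan R n lam = lam • 1 + jordan R n 0 := by
  ext i j
  by_cases h : i = j <;> simp [jordan, h]

theorem mulVecLin_jordan (n : ℕ) (lam : R) :
    (jordan R n lam).mulVecLin = lam • 1 + (jordan R n 0).mulVecLin := by
  rw [jordan_eq_smul_one_add, Matrix.mulVecLin_add]
  congr 1
  exact LinearMap.ext fun v => by simp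

theorem centralizer_jordan (n : ℕ) (lam : R) :
    Subalgebra.centralizer R {(jordan R n lam).mulVecLin} =
      Subalgebra.centralizer R {(jordan R n 0).mulVecLin} := by
  ext A
  simp only [Subalgebra.mem_centralizer_iff, Set.mem_singleton_iff, forall_eq,
    mulVecLin_jordan n lam, add_mul, mul_add, smul_mul_assoc, mul_smul_comm, one_mul, mul_one,
    add_right_inj]

theorem jordan_zero_mulVec_single {n : ℕ} {i j : Fin n} (hij : (i : ℕ) + 1 = j) :
    (jordan R n 0).mulVec (Pi.single j 1) = Pi.single i 1 := by
  ext l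
  simp only [jordan, Matrix.mulVec_single_one, Matrix.col_apply, Matrix.of_apply,
    Pi.single_apply, Fin.ext_iff]
  split_ifs <;> first | rfl | omega

theorem jordan_zero_pow_apply_single_last {n i : ℕ} (hi : i ≤ n) :
    ((jordan R (n + 1) 0).mulVecLin ^ i) (Pi.single (Fin.last n) 1) =
      Pi.single ⟨n - i, by omega⟩ 1 := by
  induction i with
  | zero => rfl
  | succ i ih =>
    rw [pow_succ', Module.End.mul_apply, ih (by omega), Matrix.mulVecLin_apply,
      jordan_zero_mulVec_single (i := ⟨n - (i + 1), by omega⟩) (by simp only; omega)]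

theorem span_jordan_zero_pow_apply_single_last (n : ℕ) :
    Submodule.span R (Set.range fun i : ℕ =>
      ((jordan R (n + 1) 0).mulVecLin ^ i) (Pi.single (Fin.last n) 1)) = ⊤ := by
  rw [eq_top_iff, ← (Pi.basisFun R (Fin (n + 1))).span_eq, Submodule.span_le]
  rintro _ ⟨j, rfl⟩
  refine Submodule.subset_span ⟨n - j, ?_⟩
  dsimp only
  rw [jordan_zero_pow_apply_single_last (by omega), Pi.basisFun_apply]
  congr
  omega

theorem finrank_centralizer_jordan {k : Type} [Field k] (n : ℕ) (lam : k) :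
    Module.finrank k (Subalgebra.centralizer k {(jordan k n lam).mulVecLin}) = n := by
  rw [centralizer_jordan]
  cases n with
  | zero => exact Module.finrank_zero_of_subsingleton
  | succ n =>
    rw [Module.End.finrank_centralizer_eq_of_span_pow_apply_eq_top _ _
      (span_jordan_zero_pow_apply_single_last n), Module.finrank_fin_fun]

section Blocks

variable {m : ℕ} {W : Type} [AddCommGroup W] [Module R W]

theorem mk1_apply (s d : Fin m) (g : W →ₗ[R] W) (y : Fin m → W) :
    mk1 s d g y = Pi.single d (g (y s)) := by
  funext r
  simp [mk1, Pi.single_apply]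

theorem prj_apply (S : Fin m → Prop) [DecidablePred S] (y : Fin m → W) (r : Fin m) :
    prj (R := R) S y r = if S r then y r else 0 :=
  rfl

theorem mk1_injective (s d : Fin m) : Function.Injective (mk1 (R := R) (W := W) s d) := by
  intro g g' h
  ext x
  simpa [mk1_apply] using congr_fun (LinearMap.congr_fun h (Pi.single s x)) d

theorem mk1_comp_mk1_of_ne {s₁ d₁ s₂ d₂ : Fin m} (h : s₁ ≠ d₂) (g₁ g₂ : W →ₗ[R] W) :
    mk1 s₁ d₁ g₁ ∘ₗ mk1 s₂ d₂ g₂ = 0 := by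
  refine LinearMap.ext fun y => funext fun r => ?_
  simp [mk1_apply, Pi.single_apply, h]

theorem piMap_single (A : W →ₗ[R] W) (r : Fin m) (x : W) :
    LinearMap.piMap (fun _ => A) (Pi.single r x) = Pi.single r (A x) :=
  funext fun _ => Pi.apply_single (fun _ => A) (fun _ => map_zero A) r x _

theorem piMap_comp_mk1 (A : W →ₗ[R] W) (s d : Fin m) (g : W →ₗ[R] W) :
    LinearMap.piMap (fun _ => A) ∘ₗ mk1 s d g = mk1 s d (A ∘ₗ g) := by
  refine LinearMap.ext fun y => funext fun r => ?_
  simp only [LinearMap.comp_apply, LinearMap.coe_piMap, Pi.map_apply, mk1_apply, Pi.single_apply]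
  split_ifs <;> simp

theorem mk1_comp_piMap (A : W →ₗ[R] W) (s d : Fin m) (g : W →ₗ[R] W) :
    mk1 s d g ∘ₗ LinearMap.piMap (fun _ => A) = mk1 s d (g ∘ₗ A) := by
  refine LinearMap.ext fun y => ?_
  simp [mk1_apply]

theorem piMap_comp_prj (A : W →ₗ[R] W) (S : Fin m → Prop) [DecidablePred S] :
    LinearMap.piMap (fun _ => A) ∘ₗ prj S = prj S ∘ₗ LinearMap.piMap (fun _ => A) := by
  refine LinearMap.ext fun y => funext fun r => ?_
  simp only [LinearMap.comp_apply, LinearMap.coe_piMap, Pi.map_apply, prj_apply]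
  split_ifs <;> simp

theorem mk1_comp_prj {S : Fin m → Prop} [DecidablePred S] {s d : Fin m} (h : S s ↔ S d)
    (g : W →ₗ[R] W) : mk1 s d g ∘ₗ prj S = prj S ∘ₗ mk1 s d g := by
  refine LinearMap.ext fun y => funext fun r => ?_
  simp only [LinearMap.comp_apply, mk1_apply, prj_apply, Pi.single_apply, h]
  split_ifs <;> simp_all

theorem apply_single_of_comp_mk1_eq {f : (Fin m → W) →ₗ[R] (Fin m → W)} {s d : Fin m}
    (hf : f ∘ₗ mk1 s d LinearMap.id = mk1 s d LinearMap.id ∘ₗ f) (x : W) :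
    f (Pi.single d x) = Pi.single d (f (Pi.single s x) s) := by
  simpa [mk1_apply] using LinearMap.congr_fun hf (Pi.single s x)

theorem apply_single_apply_eq_zero_of_comp_prj_eq {f : (Fin m → W) →ₗ[R] (Fin m → W)}
    {S : Fin m → Prop} [DecidablePred S] (hf : f ∘ₗ prj S = prj S ∘ₗ f) {r r' : Fin m}
    (hr : S r) (hr' : ¬ S r') (x : W) : f (Pi.single r x) r' = 0 := by
  have hfix : prj (R := R) S (Pi.single r x) = Pi.single r x := by
    funext r''
    by_cases h : r'' = r
    · subst h; simp [prj_apply, hr]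
    · simp [prj_apply, h]
  have h := congr_fun (LinearMap.congr_fun hf (Pi.single r x)) r'
  rwa [LinearMap.comp_apply, LinearMap.comp_apply, hfix, prj_apply, if_neg hr'] at h

end Blocks

section Band

variable [NeZero e]

theorem sndRow_ne_lastRow : sndRow e ≠ lastRow e := by
  have := NeZero.pos e
  simp only [sndRow, lastRow, ne_eq, Fin.ext_iff]
  omega

theorem vrt_ne_ve {r : Fin (e + 1)} (h₁ : r ≠ sndRow e) (h₂ : r ≠ lastRow e) :
    vrt e r ≠ ve e := by
  have hr : (r : ℕ) < e - 1 := by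
    simp only [ne_eq, Fin.ext_iff, sndRow, lastRow] at h₁ h₂
    omega
  rw [vrt, dif_pos hr, ne_eq, Fin.ext_iff]
  simp only [ve]
  omega

theorem vrt_sndRow : vrt e (sndRow e) = ve e := by
  simp [vrt, sndRow]

theorem vrt_lastRow : vrt e (lastRow e) = ve e :=
  dif_neg (by simp [lastRow])

variable (n : ℕ) (lam : R)

theorem band_a_ve :
    (band R e n lam).a (ve e) = mk1 (sndRow e) ⟨0, by omega⟩ LinearMap.id :=
  if_pos rfl

theorem band_a_of_lt {m : ℕ} (hm : m + 2 < e) :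
    (band R e n lam).a ⟨m, by omega⟩ = mk1 ⟨m, by omega⟩ ⟨m + 1, by omega⟩ LinearMap.id := by
  dsimp only
  rw [if_neg (by omega), if_neg (by omega)]

theorem band_a_vem (he : 2 ≤ e) :
    (band R e n lam).a (vem e) = mk1 ⟨e - 2, by omega⟩ (lastRow e) LinearMap.id := by
  dsimp only [vem]
  rw [if_neg (by omega), if_pos rfl]

theorem band_a_eq_mk1 (he : 2 ≤ e) (j : Fin e) : ∃ s d, (band R e n lam).a j =
    mk1 s d LinearMap.id ∧ s ≠ lastRow e ∧ d ≠ sndRow e := by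
  simp only [band]
  split_ifs with h1 h2
  · exact ⟨_, _, rfl, sndRow_ne_lastRow, Fin.ne_of_val_ne (by simp only [sndRow]; omega)⟩
  · exact ⟨_, _, rfl, Fin.ne_of_val_ne (by simp only [lastRow]; omega), sndRow_ne_lastRow.symm⟩
  · exact ⟨_, _, rfl, Fin.ne_of_val_ne (by simp only [lastRow]; omega),
      Fin.ne_of_val_ne (by simp only [sndRow]; omega)⟩

variable {n lam}

variable (e) in
def bandEnd (A C : Module.End R (Fin n → R)) : Module.End R (Fin (e + 1) → Fin n → R) :=
  LinearMap.piMap (fun _ => A) + mk1 (sndRow e) (lastRow e) C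

variable (e) in
def bandDiag (f : Module.End R (Fin (e + 1) → Fin n → R)) : Module.End R (Fin n → R) :=
  LinearMap.proj (sndRow e) ∘ₗ f ∘ₗ LinearMap.single R (fun _ => Fin n → R) (sndRow e)

variable (e) in
def bandCorner (f : Module.End R (Fin (e + 1) → Fin n → R)) : Module.End R (Fin n → R) :=
  LinearMap.proj (lastRow e) ∘ₗ f ∘ₗ LinearMap.single R (fun _ => Fin n → R) (sndRow e)

theorem bandDiag_bandEnd (A C : Module.End R (Fin n → R)) : bandDiag e (bandEnd e A C) = A := by
  refine LinearMap.ext fun x => ?_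
  simp [bandDiag, bandEnd, mk1_apply, sndRow_ne_lastRow]

theorem bandCorner_bandEnd (A C : Module.End R (Fin n → R)) :
    bandCorner e (bandEnd e A C) = C := by
  refine LinearMap.ext fun x => ?_
  simp [bandCorner, bandEnd, mk1_apply, sndRow_ne_lastRow.symm]

theorem bandEnd_mem_homSet (he : 2 ≤ e) {A : Module.End R (Fin n → R)}
    (hA : A ∈ Subalgebra.centralizer R {(jordan R n lam).mulVecLin}) (C : Module.End R (Fin n → R)) :
    bandEnd e A C ∈ homSet (band R e n lam) (band R e n lam) := by
  refine ⟨fun i => ?_, fun j => ?_, ?_⟩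
  · have hi : vrt e (sndRow e) = i ↔ vrt e (lastRow e) = i := by rw [vrt_sndRow, vrt_lastRow]
    simp only [bandEnd, LinearMap.add_comp, LinearMap.comp_add, piMap_comp_prj,
      mk1_comp_prj (S := fun r => vrt e r = i) hi]
  · obtain ⟨s, d, hj, hs, hd⟩ := band_a_eq_mk1 n lam he j
    rw [hj]
    simp only [bandEnd, LinearMap.add_comp, LinearMap.comp_add, piMap_comp_mk1, mk1_comp_piMap,
      mk1_comp_mk1_of_ne hd.symm, mk1_comp_mk1_of_ne hs, LinearMap.comp_id, LinearMap.id_comp]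
  · have hJA : (jordan R n lam).mulVecLin * A = A * (jordan R n lam).mulVecLin :=
      (Subalgebra.mem_centralizer_iff R).1 hA _ rfl
    simp only [bandEnd, LinearMap.add_comp, LinearMap.comp_add, piMap_comp_mk1, mk1_comp_piMap,
      mk1_comp_mk1_of_ne sndRow_ne_lastRow, add_zero]
    exact congrArg _ hJA.symm

section Hom

variable {f : Module.End R (Fin (e + 1) → Fin n → R)}
  (hf : f ∈ homSet (band R e n lam) (band R e n lam))
include hf

theorem apply_single_sndRow_of_mem_homSet (x : Fin n → R) :
    f (Pi.single (sndRow e) x) =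
      Pi.single (sndRow e) (bandDiag e f x) + Pi.single (lastRow e) (bandCorner e f x) := by
  funext r
  by_cases h₁ : r = sndRow e
  · subst h₁
    simp [sndRow_ne_lastRow, bandDiag]
  by_cases h₂ : r = lastRow e
  · subst h₂
    simp [sndRow_ne_lastRow.symm, bandCorner]
  simp only [Pi.add_apply, Pi.single_apply, h₁, h₂, if_false, add_zero]
  exact apply_single_apply_eq_zero_of_comp_prj_eq (hf.1 (ve e)) vrt_sndRow (vrt_ne_ve h₁ h₂) x

theorem apply_single_of_mem_homSet {m : ℕ} (hm : m + 1 < e) (x : Fin n → R) :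
    f (Pi.single ⟨m, by omega⟩ x) = Pi.single ⟨m, by omega⟩ (bandDiag e f x) := by
  induction m with
  | zero =>
    have h := hf.2.1 (ve e)
    rw [band_a_ve] at h
    rw [apply_single_of_comp_mk1_eq h]
    rfl
  | succ m ih =>
    have h := hf.2.1 ⟨m, by omega⟩
    rw [band_a_of_lt n lam hm] at h
    rw [apply_single_of_comp_mk1_eq h, ih (by omega), Pi.single_eq_same]

theorem apply_single_lastRow_of_mem_homSet (he : 2 ≤ e) (x : Fin n → R) :
    f (Pi.single (lastRow e) x) = Pi.single (lastRow e) (bandDiag e f x) := by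
  have h := hf.2.1 (vem e)
  rw [band_a_vem n lam he] at h
  rw [apply_single_of_comp_mk1_eq h, apply_single_of_mem_homSet hf (m := e - 2) (by omega),
    Pi.single_eq_same]

theorem eq_bandEnd_of_mem_homSet (he : 2 ≤ e) : f = bandEnd e (bandDiag e f) (bandCorner e f) := by
  refine LinearMap.pi_ext fun r x => ?_
  by_cases h₁ : r = sndRow e
  · subst h₁
    rw [apply_single_sndRow_of_mem_homSet hf]
    simp [bandEnd, mk1_apply, piMap_single]
  by_cases h₂ : r = lastRow e
  · subst h₂
    rw [apply_single_lastRow_of_mem_homSet hf he]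
    simp [bandEnd, mk1_apply, piMap_single, sndRow_ne_lastRow.symm]
  have hr : (r : ℕ) + 1 < e := by
    simp only [Fin.ext_iff, sndRow, lastRow] at h₁ h₂
    omega
  rw [show r = ⟨r, by omega⟩ from rfl, apply_single_of_mem_homSet hf hr]
  simp [bandEnd, mk1_apply, piMap_single, h₁]

theorem bandDiag_mem_centralizer (he : 2 ≤ e) :
    bandDiag e f ∈ Subalgebra.centralizer R {(jordan R n lam).mulVecLin} := by
  have hd := hf.2.2
  rw [eq_bandEnd_of_mem_homSet hf he] at hd
  simp only [bandEnd, LinearMap.add_comp, LinearMap.comp_add, piMap_comp_mk1, mk1_comp_piMap,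
    mk1_comp_mk1_of_ne sndRow_ne_lastRow, add_zero] at hd
  rw [Subalgebra.mem_centralizer_iff]
  rintro _ rfl
  exact (mk1_injective _ _ hd).symm

end Hom

variable (n lam) in
def bandEndEquiv (he : 2 ≤ e) :
    (Subalgebra.toSubmodule (Subalgebra.centralizer R {(jordan R n lam).mulVecLin}) ×
      Module.End R (Fin n → R)) ≃ₗ[R]
      homSet (band R e n lam) (band R e n lam) where
  toFun p := ⟨bandEnd e p.1 p.2, bandEnd_mem_homSet he p.1.2 p.2⟩
  invFun f := (⟨bandDiag e f, bandDiag_mem_centralizer f.2 he⟩, bandCorner e f)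
  map_add' p q := Subtype.ext <| LinearMap.ext fun y => funext fun r => by
    simp only [bandEnd, Prod.fst_add, Submodule.coe_add, Prod.snd_add, LinearMap.add_apply,
      LinearMap.coe_piMap, mk1_apply, Pi.single_add, Pi.add_apply, Pi.map_apply]
    abel
  map_smul' c p := Subtype.ext <| LinearMap.ext fun y => funext fun r => by
    simp [bandEnd, mk1_apply, Pi.single_smul]
  left_inv p := by simp [bandDiag_bandEnd, bandCorner_bandEnd]
  right_inv f := Subtype.ext (eq_bandEnd_of_mem_homSet f.2 he).symm

end Band

theorem band_end_dim_general (k : Type) [Field k] (e : ℕ) (he : 2 ≤ e) [NeZero e]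
    (n : ℕ) (lam : k) :
    Module.finrank k (homSet (band k e n lam) (band k e n lam)) = n ^ 2 + n := by
  have := Module.Free.of_divisionRing k
    (Subalgebra.toSubmodule (Subalgebra.centralizer k {(jordan k n lam).mulVecLin}))
  rw [← (bandEndEquiv n lam he).finrank_eq, Module.finrank_prod, Subalgebra.finrank_toSubmodule,
    finrank_centralizer_jordan, Module.finrank_linearMap, Module.finrank_fin_fun]
  ring

/-- For every `n ≥ 1` and `λ ≠ 0`, the space of `Λ_e`-module
endomorphisms of the band module `B(n, λ)` has `k`-dimension `n² + n`. -/
theorem band_end_dim (k : Type) [Field k] (e : ℕ) (he : 2 ≤ e) [NeZero e]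
    (n : ℕ) (hn : 1 ≤ n) (lam : k) (hlam : lam ≠ 0) :
    Module.finrank k (homSet (band k e n lam) (band k e n lam)) = n ^ 2 + n :=
  band_end_dim_general k e he n lam

end GBTA
end

section
/- Let λ ∈ k, λ ≠ 0. For every 1 ≤ i ≤ e−1 and all Λ_e-module homomorphisms g : B(1,λ) → P_i and h : P_i → B(1,λ), the composite h∘g is zero. In particular every endomorphism of B(1,λ) factoring through P_i vanishes. -/
/-! Common framework: representations of the quiver Q_e / modules over the
generalized Brauer star algebra Λ_e, encoded as a module `V` together with
endomorphisms `v i` (images of the vertex idempotents), `a i` (images of the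
arrows; `a i` is the arrow leaving vertex `i`, with `a ⟨e-1⟩` the arrow
`α_e : e → 1`) and `d` (image of the loop `δ`). -/

namespace GBTA

variable {R : Type} [CommRing R] {e : ℕ}

/-! Summing all arrows gives an operator `A` on every representation which homomorphisms
intertwine. On `P_i` it is the shift `p_l ↦ p_{l+1}` along a chain of length `2e+1`; on
`B(1,λ)` it is the shift along the chain `c_e, c_1, …, c_{e-1}, c_{e+1}`, so there
`A^{e+1} = 0` and `δ = λ A^e`. For `g : B(1,λ) → P_i` this gives `λ A^e g = g δ = δ g = 0`,
so `g` lands in `ker A^e = im A^{e+1}` (as `P_i` is uniserial), while for `h : P_i → B(1,λ)`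
we have `h A^{e+1} = A^{e+1} h = 0`. Hence `h ∘ g = 0`. -/

def shift (R : Type) [CommRing R] (n : ℕ) : Module.End R (Fin n → R) where
  toFun y s := if h : 0 < s.val then y ⟨s.val - 1, by omega⟩ else 0
  map_add' x y := by funext s; split_ifs <;> simp [*]
  map_smul' c x := by funext s; split_ifs <;> simp [*]

theorem shift_pow_apply (n m : ℕ) (y : Fin n → R) (s : Fin n) :
    (shift R n ^ m) y s = if h : m ≤ s.val then y ⟨s.val - m, by omega⟩ else 0 := by
  induction m generalizing s with
  | zero => simp
  | succ m ih =>
    rw [pow_succ', Module.End.mul_apply]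
    change (if h : 0 < s.val then (shift R n ^ m) y ⟨s.val - 1, by omega⟩ else 0) = _
    by_cases hs : m + 1 ≤ s.val
    · rw [dif_pos (by omega), ih, dif_pos (by dsimp only; omega), dif_pos hs]
      congr 2
      dsimp only
      omega
    · rw [dif_neg hs]
      split_ifs with h0
      · rw [ih, dif_neg (by dsimp only; omega)]
      · rfl

theorem shift_pow_self (n : ℕ) : shift R n ^ n = 0 :=
  LinearMap.ext fun y => funext fun s => by
    rw [shift_pow_apply, dif_neg (by omega)]
    rfl

theorem ker_shift_pow_le_range {n m l : ℕ} (hml : m + l = n) :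
    LinearMap.ker (shift R n ^ m) ≤ LinearMap.range (shift R n ^ l) := by
  intro y hy
  have hlow : ∀ s : Fin n, s.val + m < n → y s = 0 := fun s hs => by
    simpa [shift_pow_apply] using congrFun hy ⟨s.val + m, hs⟩
  refine ⟨fun p => if h : p.val + l < n then y ⟨p.val + l, h⟩ else 0, ?_⟩
  funext s
  rw [shift_pow_apply]
  by_cases hs : l ≤ s.val
  · rw [dif_pos hs, dif_pos (by dsimp only; omega)]
    congr
    dsimp only
    omega
  · rw [dif_neg hs, hlow s (by omega)]

theorem mk1_apply_s9 {m : ℕ} {W : Type} [AddCommGroup W] [Module R W] (src dst : Fin m)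
    (g : W →ₗ[R] W) (x : Fin m → W) (r : Fin m) :
    mk1 src dst g x r = if r = dst then g (x src) else 0 := rfl

theorem sum_mk1_succ_eq_shift (n : ℕ) :
    ∑ l : Fin n, mk1 l.castSucc l.succ (LinearMap.id (R := R) (M := R)) = shift R (n + 1) := by
  refine LinearMap.ext fun y => funext fun s => ?_
  rw [LinearMap.sum_apply, Finset.sum_apply]
  simp only [mk1_apply_s9, LinearMap.id_apply]
  change _ = if h : 0 < s.val then y ⟨s.val - 1, by omega⟩ else 0
  cases s using Fin.cases with
  | zero => exact Finset.sum_eq_zero fun l _ => if_neg (Fin.succ_ne_zero l).symm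
  | succ j =>
    rw [dif_pos (show 0 < (j.succ : ℕ) from Nat.succ_pos _)]
    simp only [Fin.succ_inj, Finset.sum_ite_eq, Finset.mem_univ, if_true]
    rfl

def arrowSum (ρ : PreRep R e) : Module.End R ρ.V := ∑ t, ρ.a t

theorem arrowSum_pow_comp_of_mem_homSet {ρ σ : PreRep R e} {f : ρ.V →ₗ[R] σ.V}
    (hf : f ∈ homSet ρ σ) (m : ℕ) : f ∘ₗ (arrowSum ρ ^ m) = (arrowSum σ ^ m) ∘ₗ f := by
  refine (Module.End.commute_pow_left_of_commute (LinearMap.ext fun x => ?_) m).symm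
  simp only [arrowSum, LinearMap.comp_apply, LinearMap.sum_apply, map_sum]
  exact Finset.sum_congr rfl fun t _ => (LinearMap.congr_fun (hf.2.1 t) x).symm

theorem arrowSum_Puni [NeZero e] (i0 : ℕ) : arrowSum (Puni R e i0) = shift R (2 * e + 1) := by
  rw [arrowSum, Finset.sum_comm, ← sum_mk1_succ_eq_shift]
  refine Finset.sum_congr rfl fun l _ => ?_
  rw [Finset.sum_eq_single ⟨(i0 + l.val) % e, Nat.mod_lt _ (NeZero.pos e)⟩, if_pos rfl]
  · intro t _ ht
    rw [if_neg fun h => ht (Fin.ext h.symm)]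
  · simp

theorem arrowSum_band1_apply (n : ℕ) (s : R) (x : Fin (n + 3) → R) (r : Fin (n + 3)) :
    arrowSum (band1 R (n + 2) s) x r =
      (∑ i : Fin n, if r = ⟨i + 1, by omega⟩ then x ⟨i, by omega⟩ else 0) +
        (if r = lastRow (n + 2) then x ⟨n, by omega⟩ else 0) +
        (if r = 0 then x (sndRow (n + 2)) else 0) := by
  have h1 : ∀ i : Fin n, (i : ℕ) ≠ n + 1 := fun i => by omega
  have h2 : ∀ i : Fin n, (i : ℕ) ≠ n := fun i => by omega
  simp only [arrowSum, Fin.sum_univ_castSucc]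
  simp [h1, h2, mk1_apply_s9]

/-- Position along the string `c_e → c_1 → ⋯ → c_{e-1} → c_{e+1}` of each basis vector of
`B(1,λ)`, indexed by rows as in `band1`. -/
abbrev bandPos (e : ℕ) : Equiv.Perm (Fin (e + 1)) := Fin.cycleRange (sndRow e)

theorem bandPos_val_of_le {r : Fin (e + 1)} (hr : r.val + 2 ≤ e) :
    (bandPos e r).val = r.val + 1 :=
  Fin.coe_cycleRange_of_lt (Fin.lt_def.2 (by simp only [sndRow]; omega))

theorem bandPos_sndRow : bandPos e (sndRow e) = 0 := Fin.cycleRange_self _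

theorem bandPos_lastRow (he : 1 ≤ e) : bandPos e (lastRow e) = lastRow e :=
  Fin.cycleRange_of_gt (Fin.lt_def.2 (by simp only [sndRow, lastRow]; omega))

theorem conjRingEquiv_funCongrLeft_apply_comp {n : ℕ} (c : Equiv.Perm (Fin n))
    (f : Module.End R (Fin n → R)) (y : Fin n → R) :
    (LinearEquiv.funCongrLeft R R c).conjRingEquiv f (y ∘ c) = f y ∘ c :=
  congrArg (fun z => f z ∘ c) ((LinearEquiv.funCongrLeft R R c).symm_apply_apply y)

theorem arrowSum_band1 (he : 2 ≤ e) [NeZero e] (s : R) :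
    arrowSum (band1 R e s) =
      (LinearEquiv.funCongrLeft R R (bandPos e)).conjRingEquiv (shift R (e + 1)) := by
  obtain ⟨n, rfl⟩ : ∃ n, e = n + 2 := ⟨e - 2, by omega⟩
  refine LinearMap.ext fun x => funext fun r => ?_
  obtain ⟨y, rfl⟩ : ∃ y, x = y ∘ bandPos (n + 2) :=
    ⟨x ∘ (bandPos (n + 2)).symm, ((bandPos (n + 2)).comp_symm_eq _ _).1 rfl⟩
  rw [conjRingEquiv_funCongrLeft_apply_comp, arrowSum_band1_apply]
  change _ = if h : 0 < (bandPos (n + 2) r).val then y ⟨_ - 1, by omega⟩ else 0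
  simp only [Function.comp_apply]
  rcases (show r.val = 0 ∨ (1 ≤ r.val ∧ r.val ≤ n) ∨ r.val = n + 1 ∨ r.val = n + 2 by omega)
    with hr | hr | hr | hr
  · have hcr := bandPos_val_of_le (show r.val + 2 ≤ n + 2 by omega)
    rw [Finset.sum_eq_zero fun i _ => if_neg (Fin.ne_of_val_ne (by dsimp only; omega)),
      if_neg (Fin.ne_of_val_ne (by simp only [lastRow]; omega)), if_pos (Fin.ext hr),
      dif_pos (by omega), bandPos_sndRow, zero_add, zero_add]
    exact congrArg y (Fin.ext (by simp only [Fin.val_zero, hcr, hr]))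
  · have hcr := bandPos_val_of_le (show r.val + 2 ≤ n + 2 by omega)
    have hcp := bandPos_val_of_le (e := n + 2) (r := ⟨r.val - 1, by omega⟩) (by dsimp only; omega)
    rw [Finset.sum_eq_single ⟨r.val - 1, by omega⟩, if_pos (Fin.ext (by dsimp only; omega)),
      if_neg (Fin.ne_of_val_ne (by simp only [lastRow]; omega)),
      if_neg (Fin.ne_of_val_ne (by simp only [Fin.val_zero]; omega)),
      dif_pos (by omega), add_zero, add_zero]
    · exact congrArg y (Fin.ext (by simp only [hcp, hcr]; omega))
    · exact fun i _ hi => if_neg fun h =>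
        hi (Fin.ext (by rw [Fin.ext_iff] at h; dsimp only at h ⊢; omega))
    · exact fun h => absurd (Finset.mem_univ _) h
  · have hrs : r = sndRow (n + 2) := Fin.ext hr
    rw [Finset.sum_eq_zero fun i _ => if_neg (Fin.ne_of_val_ne (by dsimp only; omega)),
      if_neg (Fin.ne_of_val_ne (by simp only [lastRow]; omega)),
      if_neg (Fin.ne_of_val_ne (by simp only [Fin.val_zero]; omega)),
      dif_neg (by simp only [hrs, bandPos_sndRow, Fin.val_zero]; omega), zero_add, zero_add]
  · have hcr : bandPos _ r = r := by
      rw [show r = lastRow (n + 2) from Fin.ext hr, bandPos_lastRow (by omega)]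
    have hcn := bandPos_val_of_le (e := n + 2) (r := ⟨n, by omega⟩) le_rfl
    rw [Finset.sum_eq_zero fun i _ => if_neg (Fin.ne_of_val_ne (by dsimp only; omega)),
      if_pos (Fin.ext hr), if_neg (Fin.ne_of_val_ne (by simp only [Fin.val_zero]; omega)),
      dif_pos (by rw [hcr]; omega), zero_add, add_zero]
    exact congrArg y (Fin.ext (by simp only [hcn, hcr]; omega))

theorem arrowSum_band1_pow_succ (he : 2 ≤ e) [NeZero e] (s : R) :
    arrowSum (band1 R e s) ^ (e + 1) = 0 := by
  rw [arrowSum_band1 he, ← map_pow, shift_pow_self, map_zero]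

theorem band1_d_eq_smul_arrowSum_pow (he : 2 ≤ e) [NeZero e] (s : R) :
    (band1 R e s).d = s • arrowSum (band1 R e s) ^ e := by
  rw [arrowSum_band1 he, ← map_pow]
  refine LinearMap.ext fun x => funext fun r => ?_
  obtain ⟨y, rfl⟩ : ∃ y, x = y ∘ bandPos e :=
    ⟨x ∘ (bandPos e).symm, ((bandPos e).comp_symm_eq _ _).1 rfl⟩
  rw [LinearMap.smul_apply, conjRingEquiv_funCongrLeft_apply_comp, Pi.smul_apply,
    Function.comp_apply, shift_pow_apply, mk1_apply_s9]
  have hlast := bandPos_lastRow (show 1 ≤ e by omega)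
  by_cases hr : r = lastRow e
  · subst hr
    rw [if_pos rfl, dif_pos (by rw [hlast]; exact le_rfl), Function.comp_apply, bandPos_sndRow]
    refine congrArg (s • y ·) (Fin.ext ?_)
    simp only [hlast, Fin.val_zero]
    exact (Nat.sub_self e).symm
  · rw [if_neg hr, dif_neg, smul_zero]
    intro h
    apply hr
    apply (bandPos e).injective
    rw [hlast]
    exact Fin.ext (by simp only [lastRow]; omega)

theorem comp_arrowSum_pow_eq_zero_of_mem_homSet_band1 {k : Type} [Field k] (he : 2 ≤ e)
    [NeZero e] {lam : k} (hlam : lam ≠ 0) {σ : PreRep k e} (hσ : σ.d = 0)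
    {g : (band1 k e lam).V →ₗ[k] σ.V} (hg : g ∈ homSet (band1 k e lam) σ) :
    g ∘ₗ arrowSum (band1 k e lam) ^ e = 0 := by
  have hd : lam • (g ∘ₗ arrowSum (band1 k e lam) ^ e) = 0 := by
    rw [← LinearMap.comp_smul, ← band1_d_eq_smul_arrowSum_pow he, hg.2.2, hσ,
      LinearMap.zero_comp]
  exact (smul_eq_zero.1 hd).resolve_left hlam

theorem comp_arrowSum_pow_succ_eq_zero_of_mem_homSet_band1 (he : 2 ≤ e) [NeZero e] {s : R}
    {σ : PreRep R e} {h : σ.V →ₗ[R] (band1 R e s).V} (hh : h ∈ homSet σ (band1 R e s)) :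
    h ∘ₗ arrowSum σ ^ (e + 1) = 0 := by
  rw [arrowSum_pow_comp_of_mem_homSet hh, arrowSum_band1_pow_succ he, LinearMap.zero_comp]

theorem band1_through_Pi_general (k : Type) [Field k] (e : ℕ) (he : 2 ≤ e) [NeZero e]
    (lam : k) (hlam : lam ≠ 0) (i : ℕ) :
    (∀ g ∈ homSet (band1 k e lam) (Puni k e (i - 1)),
      ∀ h ∈ homSet (Puni k e (i - 1)) (band1 k e lam), h ∘ₗ g = 0) ∧
    (∀ f : (band1 k e lam).V →ₗ[k] (band1 k e lam).V,
      (∃ g ∈ homSet (band1 k e lam) (Puni k e (i - 1)),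
        ∃ h ∈ homSet (Puni k e (i - 1)) (band1 k e lam), f = h ∘ₗ g) → f = 0) := by
  have key : ∀ g ∈ homSet (band1 k e lam) (Puni k e (i - 1)),
      ∀ h ∈ homSet (Puni k e (i - 1)) (band1 k e lam), h ∘ₗ g = 0 := by
    intro g hg h hh
    have hg' : LinearMap.range g ≤ LinearMap.ker (shift k (2 * e + 1) ^ e) := by
      rw [LinearMap.range_le_ker_iff, ← arrowSum_Puni (i - 1),
        ← arrowSum_pow_comp_of_mem_homSet hg,
        comp_arrowSum_pow_eq_zero_of_mem_homSet_band1 he hlam rfl hg]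
    have hh' : LinearMap.range (shift k (2 * e + 1) ^ (e + 1)) ≤ LinearMap.ker h := by
      rw [LinearMap.range_le_ker_iff, ← arrowSum_Puni (i - 1),
        comp_arrowSum_pow_succ_eq_zero_of_mem_homSet_band1 he hh]
    exact LinearMap.range_le_ker_iff.1 (hg'.trans ((ker_shift_pow_le_range (by omega)).trans hh'))
  exact ⟨key, by rintro f ⟨g, hg, h, hh, rfl⟩; exact key g hg h hh⟩

/-- For `1 ≤ i ≤ e-1`, every composite `B(1,λ) → P_i → B(1,λ)`
of `Λ_e`-homomorphisms is zero; in particular every endomorphism of `B(1,λ)`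
factoring through `P_i` vanishes. -/
theorem band1_through_Pi (k : Type) [Field k] (e : ℕ) (he : 2 ≤ e) [NeZero e]
    (lam : k) (hlam : lam ≠ 0) (i : ℕ) (hi : 1 ≤ i) (hie : i ≤ e - 1) :
    (∀ g ∈ homSet (band1 k e lam) (Puni k e (i - 1)),
      ∀ h ∈ homSet (Puni k e (i - 1)) (band1 k e lam), h ∘ₗ g = 0) ∧
    (∀ f : (band1 k e lam).V →ₗ[k] (band1 k e lam).V,
      (∃ g ∈ homSet (band1 k e lam) (Puni k e (i - 1)),
        ∃ h ∈ homSet (Puni k e (i - 1)) (band1 k e lam), f = h ∘ₗ g) → f = 0) :=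
  band1_through_Pi_general k e he lam hlam i

end GBTA
end
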